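/- arXiv:0801.2370 — 2 statements merged into one kernel-verified Lean document; each statement's English description precedes it below -/
import Mathlib

section
/- Blowing down preserves representing zero: if (c_1, ..., c_k) is a chain of integers with k ≥ 3, c_h = 1 for some 1 < h < k, and the continued fraction [c_1, ..., c_k] is well defined and equals 0, then the blown-down chain (c_1, ..., c_{h-1}−1, c_{h+1}−1, ..., c_k) also has well-defined continued fraction equal to 0. -/
/-!
Blowing down changes only a window of three entries: with `v = [b, …]`, the identity
`a - 1/(1 - 1/v) = (a - 1) - 1/(v - 1)` shows `[a, 1, b, …] = [a - 1, b - 1, …]` whenever the left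
side is defined (then `v ≠ 0, 1`). A continued fraction depends on its tail only through the tail's
value, so the equality survives prepending any prefix, and in particular the value `0` is preserved.
-/

/-- Hirzebruch–Jung continued fraction `[c_1,...,c_k] = c_1 - 1/[c_2,...,c_k]`,
`[c_k] = c_k`; returns `none` if the list is empty or a division by zero occurs. -/
def hjcf : List ℚ → Option ℚ
  | [] => none
  | [c] => some c
  | c :: l@(_ :: _) =>
      (hjcf l).bind fun v => if v = 0 then none else some (c - 1 / v)

theorem hjcf_cons_eq_some_iff (c : ℚ) {m : List ℚ} (hm : m ≠ []) {x : ℚ} :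
    hjcf (c :: m) = some x ↔ ∃ v, hjcf m = some v ∧ v ≠ 0 ∧ x = c - 1 / v := by
  obtain ⟨d, m, rfl⟩ := List.exists_cons_of_ne_nil hm
  simp only [hjcf, Option.bind_eq_some_iff]
  grind

theorem hjcf_sub_one_cons (c : ℚ) (l : List ℚ) :
    hjcf ((c - 1) :: l) = (hjcf (c :: l)).map (· - 1) := by
  rcases l with _ | ⟨d, l⟩
  · simp [hjcf]
  · simp only [hjcf]
    rcases hjcf (d :: l) with _ | v
    · rfl
    · by_cases hv : v = 0 <;> simp [hv, sub_right_comm]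

theorem hjcf_blowdown_cons {a b x : ℚ} {l : List ℚ} (h : hjcf (a :: 1 :: b :: l) = some x) :
    hjcf ((a - 1) :: (b - 1) :: l) = some x := by
  obtain ⟨w, hw, hw0, rfl⟩ := (hjcf_cons_eq_some_iff a (List.cons_ne_nil _ _)).1 h
  obtain ⟨v, hv, hv0, rfl⟩ := (hjcf_cons_eq_some_iff 1 (List.cons_ne_nil _ _)).1 hw
  have hv1 : v - 1 ≠ 0 := sub_ne_zero.2 (by rintro rfl; norm_num at hw0)
  refine (hjcf_cons_eq_some_iff _ (List.cons_ne_nil _ _)).2 ⟨v - 1, ?_, hv1, ?_⟩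
  · rw [hjcf_sub_one_cons, hv, Option.map_some]
  · field_simp
    ring

theorem hjcf_append_of_forall_eq_some {t t' : List ℚ} (ht : t ≠ []) (ht' : t' ≠ [])
    (htt' : ∀ x, hjcf t = some x → hjcf t' = some x) (l : List ℚ) {y : ℚ}
    (h : hjcf (l ++ t) = some y) : hjcf (l ++ t') = some y := by
  induction l generalizing y with
  | nil => exact htt' y h
  | cons c l ih =>
    obtain ⟨v, hv, hv0, rfl⟩ :=
      (hjcf_cons_eq_some_iff c (List.append_ne_nil_of_right_ne_nil l ht)).1 h
    exact (hjcf_cons_eq_some_iff c (List.append_ne_nil_of_right_ne_nil l ht')).2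
      ⟨v, ih hv, hv0, rfl⟩

theorem hjcf_blowdown {l₁ l₂ : List ℚ} {a b x : ℚ}
    (h : hjcf (l₁ ++ a :: 1 :: b :: l₂) = some x) :
    hjcf (l₁ ++ (a - 1) :: (b - 1) :: l₂) = some x :=
  hjcf_append_of_forall_eq_some (List.cons_ne_nil _ _) (List.cons_ne_nil _ _)
    (fun _ => hjcf_blowdown_cons) l₁ h

/-- Blowing down preserves representing zero: if an integer chain contains an
interior entry equal to `1` and its continued fraction is well defined and
equals `0`, then the chain obtained by removing that entry and decreasing both
neighbors by `1` also has well-defined continued fraction equal to `0`. -/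
theorem blowdown_represents_zero (l₁ l₂ : List ℤ) (a b : ℤ)
    (h : hjcf ((l₁ ++ a :: 1 :: b :: l₂).map (fun c => (c : ℚ))) = some 0) :
    hjcf ((l₁ ++ (a - 1) :: (b - 1) :: l₂).map (fun c => (c : ℚ))) = some 0 := by
  -- The list coercion `List ℤ → List ℚ` elaborates through the list monad.
  simp only [List.pure_def, List.bind_eq_flatMap, List.flatMap_append, List.flatMap_cons,
    List.cons_append, List.nil_append, List.map_id_fun', id_eq, Int.cast_one, Int.cast_sub] at h ⊢
  exact hjcf_blowdown h
end

section
/- Let n > q > 0 be coprime integers, let N = ℤ² + ℤ·(1/n)(1, q) ⊂ ℝ², let σ ⊂ ℝ² be the cone spanned by (1,0) and (0,1), and let w ∈ ℤ² be a primitive generator of the dual semigroup σ^∨ ∩ M (M the dual lattice of N) which is an element of the Hilbert basis. Then the affine line H = { v ∈ ℝ² : ⟨v, w⟩ = 1 } contains at least one point of N. -/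
/-- The lattice `N = ℤ² + ℤ·(1/n)(1, q)` inside `ℝ²`. -/
def latticeN (n q : ℤ) : Set (ℝ × ℝ) :=
  {v | ∃ a b c : ℤ, v = ((a : ℝ) + (c : ℝ) / (n : ℝ), (b : ℝ) + (c : ℝ) * (q : ℝ) / (n : ℝ))}

/-- The dual lattice `M` of `N`: those `u ∈ ℝ²` pairing integrally with all of `N`. -/
def latticeM (n q : ℤ) : Set (ℝ × ℝ) :=
  {u | ∀ v ∈ latticeN n q, ∃ m : ℤ, v.1 * u.1 + v.2 * u.2 = (m : ℝ)}

/-- The semigroup `σ^∨ ∩ M`, where `σ` is the cone spanned by `(1,0)` and `(0,1)`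
(so `σ^∨` is the nonnegative quadrant). -/
def dualSemigroup (n q : ℤ) : Set (ℝ × ℝ) :=
  {u | u ∈ latticeM n q ∧ 0 ≤ u.1 ∧ 0 ≤ u.2}

/-!
The pairings `⟨v, w⟩`, `v ∈ N`, form a subgroup `dℤ` of `ℤ`, and `d ≠ 0` because `ℤ² ⊆ N` and
`w ≠ 0`. If `d ≥ 2`, every pairing with `w / d` is still integral, so
`w = w / d + (d - 1) • (w / d)` splits `w` in `σ^∨ ∩ M`. Hence `d = 1`, i.e. `1 = ⟨v, w⟩` for
some `v ∈ N`.
-/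

theorem Int.exists_two_le_forall_dvd_of_one_notMem {H : AddSubgroup ℤ} (hH : H ≠ ⊥)
    (h1 : 1 ∉ H) : ∃ d : ℤ, 2 ≤ d ∧ ∀ k ∈ H, d ∣ k := by
  obtain ⟨a, rfl⟩ := Int.subgroup_cyclic H
  rw [← AddSubgroup.zmultiples_eq_closure, ← Int.zmultiples_natAbs] at hH h1 ⊢
  refine ⟨a.natAbs, ?_, fun k hk => Int.mem_zmultiples_iff.1 hk⟩
  have h0 : (a.natAbs : ℤ) ≠ 0 := fun h => hH (by rw [h, AddSubgroup.zmultiples_zero_eq_bot])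
  have h1' : (a.natAbs : ℤ) ≠ 1 := fun h => h1 (by rw [h]; exact AddSubgroup.mem_zmultiples 1)
  omega

theorem intPoint_mem_latticeN {n q : ℤ} (a b : ℤ) : ((a : ℝ), (b : ℝ)) ∈ latticeN n q :=
  ⟨a, b, 0, by simp⟩

def latticeNSubgroup (n q : ℤ) : AddSubgroup (ℝ × ℝ) where
  carrier := latticeN n q
  zero_mem' := ⟨0, 0, 0, by ext <;> simp⟩
  add_mem' := by
    rintro _ _ ⟨a, b, c, rfl⟩ ⟨a', b', c', rfl⟩
    exact ⟨a + a', b + b', c + c', by ext <;> simp <;> ring⟩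
  neg_mem' := by
    rintro _ ⟨a, b, c, rfl⟩
    exact ⟨-a, -b, -c, by ext <;> simp <;> ring⟩

def pairingHom (u : ℝ × ℝ) : ℝ × ℝ →+ ℝ :=
  AddMonoidHom.mk' (fun v => v.1 * u.1 + v.2 * u.2) fun v v' => by
    simp only [Prod.fst_add, Prod.snd_add]; ring

def pairingValues (n q : ℤ) (u : ℝ × ℝ) : AddSubgroup ℤ :=
  ((latticeNSubgroup n q).map (pairingHom u)).comap (Int.castAddHom ℝ)

theorem mem_pairingValues {n q : ℤ} {u : ℝ × ℝ} {k : ℤ} :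
    k ∈ pairingValues n q u ↔ ∃ v ∈ latticeN n q, v.1 * u.1 + v.2 * u.2 = k :=
  Iff.rfl

theorem pairingValues_ne_bot {n q : ℤ} {u : ℝ × ℝ} (hu : u ∈ latticeM n q) (hu0 : u ≠ 0) :
    pairingValues n q u ≠ ⊥ := by
  intro hbot
  have pairing_eq_zero : ∀ v ∈ latticeN n q, v.1 * u.1 + v.2 * u.2 = 0 := by
    intro v hv
    obtain ⟨m, hm⟩ := hu v hv
    have hm0 : m ∈ pairingValues n q u := mem_pairingValues.2 ⟨v, hv, hm⟩
    rw [hbot, AddSubgroup.mem_bot] at hm0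
    simpa [hm0] using hm
  apply hu0
  ext
  · simpa using pairing_eq_zero _ (intPoint_mem_latticeN 1 0)
  · simpa using pairing_eq_zero _ (intPoint_mem_latticeN 0 1)

theorem div_smul_mem_dualSemigroup {n q : ℤ} {u : ℝ × ℝ} (hu : u ∈ dualSemigroup n q) {d : ℤ}
    (hd : 0 < d) (hdvd : ∀ k ∈ pairingValues n q u, d ∣ k) {c : ℤ} (hc : 0 ≤ c) :
    ((c : ℝ) / d) • u ∈ dualSemigroup n q := by
  have hdR : (0 : ℝ) < d := by exact_mod_cast hd
  have hcd : (0 : ℝ) ≤ c / d := div_nonneg (by exact_mod_cast hc) hdR.le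
  refine ⟨fun v hv => ?_, mul_nonneg hcd hu.2.1, mul_nonneg hcd hu.2.2⟩
  obtain ⟨m, hm⟩ := hu.1 v hv
  obtain ⟨t, rfl⟩ := hdvd m (mem_pairingValues.2 ⟨v, hv, hm⟩)
  refine ⟨c * t, ?_⟩
  simp only [Prod.smul_fst, Prod.smul_snd, smul_eq_mul]
  push_cast at hm ⊢
  field_simp
  linear_combination (c : ℝ) * hm

theorem height_one_line_meets_lattice_general (n q : ℤ) (w : ℤ × ℤ)
    (hwS : ((w.1 : ℝ), (w.2 : ℝ)) ∈ dualSemigroup n q)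
    (hw0 : w ≠ 0)
    (hirr : ¬∃ u v : ℝ × ℝ, u ∈ dualSemigroup n q ∧ v ∈ dualSemigroup n q ∧
      u ≠ 0 ∧ v ≠ 0 ∧ ((w.1 : ℝ), (w.2 : ℝ)) = u + v) :
    ∃ v ∈ latticeN n q, v.1 * (w.1 : ℝ) + v.2 * (w.2 : ℝ) = 1 := by
  set W : ℝ × ℝ := ((w.1 : ℝ), (w.2 : ℝ))
  have hW0 : W ≠ 0 := by simpa [W, Prod.ext_iff] using hw0
  by_contra hno
  have h1 : (1 : ℤ) ∉ pairingValues n q W := fun h => hno (by exact_mod_cast mem_pairingValues.1 h)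
  obtain ⟨d, hd2, hdvd⟩ :=
    Int.exists_two_le_forall_dvd_of_one_notMem (pairingValues_ne_bot hwS.1 hW0) h1
  have hd0 : 0 < d := by omega
  have hdR : (d : ℝ) ≠ 0 := by exact_mod_cast hd0.ne'
  have hd1R : ((d - 1 : ℤ) : ℝ) ≠ 0 := by exact_mod_cast (by omega : d - 1 ≠ 0)
  refine hirr ⟨(((1 : ℤ) : ℝ) / d) • W, (((d - 1 : ℤ) : ℝ) / d) • W,
    div_smul_mem_dualSemigroup hwS hd0 hdvd zero_le_one,
    div_smul_mem_dualSemigroup hwS hd0 hdvd (by omega),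
    smul_ne_zero (by simpa using hdR) hW0, smul_ne_zero (div_ne_zero hd1R hdR) hW0, ?_⟩
  rw [← add_smul, ← add_div]
  push_cast
  rw [add_sub_cancel, div_self hdR, one_smul]

/-- If `w` is a Hilbert basis element (an irreducible element) of `σ^∨ ∩ M`, then the
affine line `⟨·, w⟩ = 1` contains a point of the lattice `N`. -/
theorem height_one_line_meets_lattice (n q : ℤ) (hn : 0 < q) (hq : q < n)
    (hcop : IsCoprime n q) (w : ℤ × ℤ)
    (hwS : ((w.1 : ℝ), (w.2 : ℝ)) ∈ dualSemigroup n q)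
    (hw0 : w ≠ 0)
    (hirr : ¬∃ u v : ℝ × ℝ, u ∈ dualSemigroup n q ∧ v ∈ dualSemigroup n q ∧
      u ≠ 0 ∧ v ≠ 0 ∧ ((w.1 : ℝ), (w.2 : ℝ)) = u + v) :
    ∃ v ∈ latticeN n q, v.1 * (w.1 : ℝ) + v.2 * (w.2 : ℝ) = 1 :=
  height_one_line_meets_lattice_general n q w hwS hw0 hirr
end
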